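/- No simple, properly ordered Bratteli-Vershik system that is conjugate to a well timed system is also conjugate to an untimed system. -/

import Mathlib

/-!
Composing the two conjugacies gives a conjugacy `φ` from a well timed system to an untimed
one. The path spaces are compact, so `φ` and `φ⁻¹` are uniformly continuous: for a fixed
large `k`, `φ` maps depth `k` pairs to pairs whose depth lies in a fixed window `[1, U)`.
Since `φ` sends the unique minimal path to a minimal path and a path with a long minimal
initial segment is close to the minimal path, `φ` also maps pairs with long cuts to pairs
with long cuts. Hence for every `j` some depth `d < U` has a pair with a `j` cut, whereas in an
untimed system one `j` rules out cuts for all the finitely many depths `1 ≤ d < U` at once.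
-/

set_option autoImplicit false

/-- An ordered Bratteli diagram: finite nonempty vertex sets `V n`, a single root
vertex at level `0`, finite edge sets `E n` (edges from level `n` to level `n+1`,
multiple edges allowed), every vertex has an outgoing edge, every non-root vertex
an incoming edge, and the edges into each vertex carry a linear order, encoded by
the relation `elt` which relates only edges with the same target. -/
structure BDiagram where
  V : ℕ → Type
  E : ℕ → Type
  fintV : ∀ n, Fintype (V n)
  fintE : ∀ n, Fintype (E n)
  nonV : ∀ n, Nonempty (V n)
  rootSubsingleton : Subsingleton (V 0)
  src : ∀ {n}, E n → V n
  tgt : ∀ {n}, E n → V (n + 1)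
  hasOut : ∀ (n : ℕ) (v : V n), ∃ e : E n, src e = v
  hasIn : ∀ (n : ℕ) (v : V (n + 1)), ∃ e : E n, tgt e = v
  elt : ∀ {n}, E n → E n → Prop
  elt_tgt : ∀ (n : ℕ) (e f : E n), elt e f → tgt e = tgt f
  elt_irrefl : ∀ (n : ℕ) (e : E n), ¬ elt e e
  elt_trans : ∀ (n : ℕ) (e f g : E n), elt e f → elt f g → elt e g
  elt_total : ∀ (n : ℕ) (e f : E n), tgt e = tgt f → e ≠ f → elt e f ∨ elt f e

namespace BDiagram

variable (B : BDiagram)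

def castV {m n : ℕ} (h : m = n) (v : B.V m) : B.V n := h ▸ v

/-- An edge is minimal if no edge (into the same target) is below it. -/
def IsMinEdge {n : ℕ} (e : B.E n) : Prop := ∀ e' : B.E n, ¬ B.elt e' e

/-- An edge is maximal if no edge (into the same target) is above it. -/
def IsMaxEdge {n : ℕ} (e : B.E n) : Prop := ∀ e' : B.E n, ¬ B.elt e e'

/-- The space of infinite paths from the root. -/
def PathSpace : Type := { x : ∀ n, B.E n // ∀ n, B.tgt (x n) = B.src (x (n + 1)) }

def IsMinPath (x : B.PathSpace) : Prop := ∀ n, B.IsMinEdge (x.1 n)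

def IsMaxPath (x : B.PathSpace) : Prop := ∀ n, B.IsMaxEdge (x.1 n)

/-- Properly ordered: unique minimal and unique maximal path. -/
def ProperlyOrdered : Prop :=
  (∃! x : B.PathSpace, B.IsMinPath x) ∧ (∃! x : B.PathSpace, B.IsMaxPath x)

/-- The partial order on cofinal paths: `x < y` iff they eventually agree and at the
last disagreement the edge of `x` is below the edge of `y`. -/
def pathLT (x y : B.PathSpace) : Prop :=
  ∃ N : ℕ, B.elt (x.1 N) (y.1 N) ∧ ∀ n : ℕ, N < n → x.1 n = y.1 n

/-- `T` is the Vershik map: each non-maximal path goes to its successor, and each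
maximal path goes to a minimal path. -/
def IsVershik (T : B.PathSpace ≃ B.PathSpace) : Prop :=
  (∀ x : B.PathSpace, ¬ B.IsMaxPath x →
    B.pathLT x (T x) ∧ ∀ z : B.PathSpace, B.pathLT x z → ¬ B.pathLT z (T x)) ∧
  (∀ x : B.PathSpace, B.IsMaxPath x → B.IsMinPath (T x))

/-- `f` is a chain of consecutive edges on levels `[a, b)`. -/
def SegOn (f : ∀ i, B.E i) (a b : ℕ) : Prop :=
  ∀ i : ℕ, a ≤ i → i + 1 < b → B.tgt (f i) = B.src (f (i + 1))

/-- Simplicity: some telescoping has complete connections between adjacent levels. -/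
def Simple : Prop :=
  ∃ ns : ℕ → ℕ, StrictMono ns ∧ ns 0 = 0 ∧
    ∀ (l c : ℕ), ns (l + 1) = c + 1 →
      ∀ (v : B.V (ns l)) (w : B.V (c + 1)),
        ∃ f : ∀ i, B.E i, B.SegOn f (ns l) (c + 1) ∧ B.src (f (ns l)) = v ∧ B.tgt (f c) = w

/-- The natural (Cantor) topology on the path space, induced from the product of
the discrete topologies on the edge sets. -/
def pathTop : TopologicalSpace B.PathSpace :=
  TopologicalSpace.induced Subtype.val (@Pi.topologicalSpace ℕ B.E (fun _ => ⊥))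

/-- Integer iterates of a bijection of the path space. -/
def iterZ (T : B.PathSpace ≃ B.PathSpace) (m : ℤ) : B.PathSpace ≃ B.PathSpace :=
  (T : Equiv.Perm B.PathSpace) ^ m

/-- Two paths have the same `k`-coding: for every time `m` the initial segments of
`T^m x` and `T^m y` from the root to level `k` coincide. -/
def SameCoding (T : B.PathSpace ≃ B.PathSpace) (k : ℕ) (x y : B.PathSpace) : Prop :=
  ∀ (m : ℤ) (i : ℕ), i < k → ((B.iterZ T m) x).1 i = ((B.iterZ T m) y).1 i

/-- A depth `k` pair: distinct paths with the same `k`-coding but not the same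
`(k+1)`-coding. -/
def DepthPair (T : B.PathSpace ≃ B.PathSpace) (k : ℕ) (x y : B.PathSpace) : Prop :=
  x ≠ y ∧ B.SameCoding T k x y ∧ ¬ B.SameCoding T (k + 1) x y

/-- The pair `x, y` has a `j` cut: for some time `m`, both `T^m x` and `T^m y` are
minimal from the root into level `j`. -/
def HasCut (T : B.PathSpace ≃ B.PathSpace) (j : ℕ) (x y : B.PathSpace) : Prop :=
  ∃ m : ℤ, (∀ i : ℕ, i < j → B.IsMinEdge (((B.iterZ T m) x).1 i)) ∧
    (∀ i : ℕ, i < j → B.IsMinEdge (((B.iterZ T m) y).1 i))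

/-- Nonexpansive: for every `k ≥ 1` there are two distinct paths with the same
`k`-coding. -/
def Nonexpansive (T : B.PathSpace ≃ B.PathSpace) : Prop :=
  ∀ k : ℕ, 1 ≤ k → ∃ x y : B.PathSpace, x ≠ y ∧ B.SameCoding T k x y

/-- Well timed: for every `k ≥ 1` and every `j > k` there is a depth `k` pair with
a `j` cut. -/
def WellTimed (T : B.PathSpace ≃ B.PathSpace) : Prop :=
  ∀ k : ℕ, 1 ≤ k → ∀ j : ℕ, k < j →
    ∃ x y : B.PathSpace, B.DepthPair T k x y ∧ B.HasCut T j x y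

/-- Very well timed: for every `k ≥ 1` there is a depth `k` pair having a `j` cut
for every `j > k`. -/
def VeryWellTimed (T : B.PathSpace ≃ B.PathSpace) : Prop :=
  ∀ k : ℕ, 1 ≤ k →
    ∃ x y : B.PathSpace, B.DepthPair T k x y ∧ ∀ j : ℕ, k < j → B.HasCut T j x y

/-- Weakly well timed: for infinitely many `k ≥ 1`, for every `j > k` there is a
depth `k` pair with a `j` cut. -/
def WeaklyWellTimed (T : B.PathSpace ≃ B.PathSpace) : Prop :=
  ∀ K : ℕ, ∃ k : ℕ, K ≤ k ∧ 1 ≤ k ∧ ∀ j : ℕ, k < j →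
    ∃ x y : B.PathSpace, B.DepthPair T k x y ∧ B.HasCut T j x y

/-- Untimed: for every `k ≥ 1` there is a `j > k` such that no depth `k` pair has a
`j` cut. -/
def Untimed (T : B.PathSpace ≃ B.PathSpace) : Prop :=
  ∀ k : ℕ, 1 ≤ k → ∃ j : ℕ, k < j ∧
    ∀ x y : B.PathSpace, B.DepthPair T k x y → ¬ B.HasCut T j x y

/-- Very untimed: for every `k ≥ 1`, no depth `k` pair has a `(k+1)` cut. -/
def VeryUntimed (T : B.PathSpace ≃ B.PathSpace) : Prop :=
  ∀ k : ℕ, 1 ≤ k →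
    ∀ x y : B.PathSpace, B.DepthPair T k x y → ¬ B.HasCut T (k + 1) x y

/-- Finite paths from the root to level `n`. -/
def FinPath (n : ℕ) : Type :=
  { f : (i : Fin n) → B.E i.val //
    ∀ (i : ℕ) (h : i + 1 < n), B.tgt (f ⟨i, by omega⟩) = B.src (f ⟨i + 1, h⟩) }

/-- The lexicographic (from the end) order on finite paths to level `n` induced by
the orders on the edges. -/
def finLT {n : ℕ} (p q : B.FinPath n) : Prop :=
  ∃ (N : ℕ) (h : N < n), B.elt (p.1 ⟨N, h⟩) (q.1 ⟨N, h⟩) ∧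
    ∀ (i : ℕ) (hi : i < n), N < i → p.1 ⟨i, hi⟩ = q.1 ⟨i, hi⟩

/-- The finite path `p` to level `n` ends at the vertex `v`. -/
def EndsAt {n : ℕ} (p : B.FinPath n) (v : B.V n) : Prop :=
  ∀ (m : ℕ) (h : n = m + 1), B.tgt (p.1 ⟨m, by omega⟩) = B.castV h v

/-- The initial segment of an infinite path, from the root to level `n`. -/
def pathInit (x : B.PathSpace) (n : ℕ) : B.FinPath n :=
  ⟨fun i => x.1 i.val, fun i _ => x.2 i⟩

/-- The vertex of an infinite path at level `n`. -/
def pathVert (x : B.PathSpace) (n : ℕ) : B.V n := B.src (x.1 n)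

theorem pathInit_endsAt (x : B.PathSpace) (n : ℕ) :
    B.EndsAt (B.pathInit x n) (B.pathVert x n) := by
  intro m h
  subst h
  exact x.2 m

/-- Truncation of a finite path to a lower level. -/
def truncTo {n : ℕ} (k : ℕ) (hk : k ≤ n) (p : B.FinPath n) : B.FinPath k :=
  ⟨fun i => p.1 ⟨i.val, by omega⟩, fun i h => p.2 i (by omega)⟩

/-- Paths `x, x'` are `k`-equivalent at level `n`: there is an order isomorphism
between the sets of finite paths from the root into their level-`n` vertices which
preserves truncations to level `k` (equality of `k`-basic blocks) and which matches
the initial segment of `x` with the initial segment of `x'` (the "dot" is in the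
same place). -/
def KEquivAt (k n : ℕ) (x x' : B.PathSpace) : Prop :=
  ∃ φ : { p : B.FinPath n // B.EndsAt p (B.pathVert x n) } ≃
      { p : B.FinPath n // B.EndsAt p (B.pathVert x' n) },
    (∀ p q, B.finLT p.1 q.1 ↔ B.finLT (φ p).1 (φ q).1) ∧
    (∀ p (i : ℕ) (hik : i < k) (hin : i < n), ((φ p).1).1 ⟨i, hin⟩ = (p.1).1 ⟨i, hin⟩) ∧
    φ ⟨B.pathInit x n, B.pathInit_endsAt x n⟩ = ⟨B.pathInit x' n, B.pathInit_endsAt x' n⟩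

/-- Paths are `k`-equivalent: they agree from the root to level `k` and are
`k`-equivalent at every level `n > k`. -/
def KEquivPaths (k : ℕ) (x x' : B.PathSpace) : Prop :=
  (∀ i : ℕ, i < k → x.1 i = x'.1 i) ∧ ∀ n : ℕ, k < n → B.KEquivAt k n x x'

/-- Standard nonexpansive: for every `k ≥ 1` there is a pair of distinct
`k`-equivalent paths. -/
def SNE : Prop := ∀ k : ℕ, 1 ≤ k → ∃ x x' : B.PathSpace, x ≠ x' ∧ B.KEquivPaths k x x'

/-!  ### Telescoping  -/

theorem castV_eq_of_heq {m n : ℕ} (h : m = n) {v : B.V m} {w : B.V n} (hw : HEq v w) :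
    B.castV h v = w := by
  subst h
  exact eq_of_heq hw

theorem castV_heq {m n : ℕ} (h : m = n) (v : B.V m) : HEq (B.castV h v) v := by
  subst h
  rfl

theorem castV_inj {m n : ℕ} (h : m = n) {v w : B.V m}
    (hvw : B.castV h v = B.castV h w) : v = w := by
  subst h
  exact hvw

def castE {m n : ℕ} (h : m = n) (e : B.E m) : B.E n := h ▸ e

noncomputable def chainFrom (a : ℕ) (v : B.V a) : (i : ℕ) → B.E (a + i)
  | 0 => (B.hasOut a v).choose
  | i + 1 => (B.hasOut (a + i + 1) (B.tgt (chainFrom a v i))).choose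

theorem chainFrom_src_zero (a : ℕ) (v : B.V a) : B.src (B.chainFrom a v 0) = v :=
  (B.hasOut a v).choose_spec

theorem chainFrom_src_succ (a : ℕ) (v : B.V a) (i : ℕ) :
    B.src (B.chainFrom a v (i + 1)) = B.tgt (B.chainFrom a v i) :=
  (B.hasOut (a + i + 1) (B.tgt (B.chainFrom a v i))).choose_spec

noncomputable def chainTo (a : ℕ) : (j : ℕ) → (w : B.V (a + j + 1)) → (i : ℕ) → i ≤ j → B.E (a + i)
  | 0, w, i, _ => B.castE (by omega : a + 0 = a + i) (B.hasIn a w).choose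
  | j + 1, w, i, _ =>
      if h : i ≤ j then chainTo a j (B.src (B.hasIn (a + j + 1) w).choose) i h
      else B.castE (by omega : a + (j + 1) = a + i) (B.hasIn (a + j + 1) w).choose

theorem chainTo_tgt_last (a : ℕ) : ∀ (j : ℕ) (w : B.V (a + j + 1)),
    B.tgt (B.chainTo a j w j le_rfl) = w := by
  intro j w
  cases j with
  | zero =>
      simp only [chainTo]
      exact (B.hasIn a w).choose_spec
  | succ j =>
      simp only [chainTo]
      rw [dif_neg (by omega : ¬ j + 1 ≤ j)]
      exact (B.hasIn (a + j + 1) w).choose_spec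

theorem chainTo_chain (a : ℕ) : ∀ (j : ℕ) (w : B.V (a + j + 1)) (i : ℕ) (h : i + 1 ≤ j)
    (h' : i ≤ j), B.tgt (B.chainTo a j w i h') = B.src (B.chainTo a j w (i + 1) h) := by
  intro j
  induction j with
  | zero => intro w i h h'; omega
  | succ j ih =>
      intro w i h h'
      by_cases hij : i + 1 ≤ j
      · simp only [chainTo]
        rw [dif_pos (by omega : i ≤ j), dif_pos hij]
        exact ih _ i hij (by omega)
      · have hi : i = j := by omega
        subst hi
        simp only [chainTo]
        rw [dif_pos (le_refl i), dif_neg (by omega : ¬ i + 1 ≤ i)]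
        exact B.chainTo_tgt_last a i _


def TelE (a b : ℕ) : Type :=
  { f : (i : Fin (b - a)) → B.E (a + i.val) //
    ∀ (i : ℕ) (h : i + 1 < b - a), B.tgt (f ⟨i, by omega⟩) = B.src (f ⟨i + 1, h⟩) }

def telSrc {a b : ℕ} (hab : a < b) (f : B.TelE a b) : B.V a :=
  B.src (f.1 ⟨0, by omega⟩)

def telTgt {a b : ℕ} (hab : a < b) (f : B.TelE a b) : B.V b :=
  B.castV (by omega : a + (b - a - 1) + 1 = b) (B.tgt (f.1 ⟨b - a - 1, by omega⟩))

def telLT {a b : ℕ} (f g : B.TelE a b) : Prop :=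
  ∃ (N : ℕ) (h : N < b - a), B.elt (f.1 ⟨N, h⟩) (g.1 ⟨N, h⟩) ∧
    ∀ (i : ℕ) (hi : i < b - a), N < i → f.1 ⟨i, hi⟩ = g.1 ⟨i, hi⟩

noncomputable def Telescope (ns : ℕ → ℕ) (hmono : StrictMono ns) (h0 : ns 0 = 0) : BDiagram where
  V l := B.V (ns l)
  E l := B.TelE (ns l) (ns (l + 1))
  fintV l := B.fintV (ns l)
  fintE l := by
    classical
    letI : ∀ i : Fin (ns (l + 1) - ns l), Fintype (B.E (ns l + i.val)) := fun i => B.fintE _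
    exact Subtype.fintype _
  nonV l := B.nonV (ns l)
  rootSubsingleton := by show Subsingleton (B.V (ns 0)); rw [h0]; exact B.rootSubsingleton
  src {l} f := B.telSrc (hmono (Nat.lt_succ_self l)) f
  tgt {l} f := B.telTgt (hmono (Nat.lt_succ_self l)) f
  hasOut := by
    intro l v
    refine ⟨⟨fun i => B.chainFrom (ns l) v i.val,
      fun i h => (B.chainFrom_src_succ (ns l) v i).symm⟩, ?_⟩
    exact B.chainFrom_src_zero (ns l) v
  hasIn := by
    intro l w
    have hab : ns l < ns (l + 1) := hmono (Nat.lt_succ_self l)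
    have hj : ns l + (ns (l + 1) - ns l - 1) + 1 = ns (l + 1) := by omega
    refine ⟨⟨fun i => B.chainTo (ns l) (ns (l + 1) - ns l - 1) (B.castV hj.symm w) i.val
        (by omega), fun i h => B.chainTo_chain _ _ _ i (by omega) (by omega)⟩, ?_⟩
    show B.castV (by omega) (B.tgt (B.chainTo (ns l) (ns (l + 1) - ns l - 1)
      (B.castV hj.symm w) (ns (l + 1) - ns l - 1) (by omega))) = w
    rw [B.chainTo_tgt_last]
    exact B.castV_eq_of_heq _ (B.castV_heq _ w)
  elt {l} f g := B.telLT f g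
  elt_tgt := by
    rintro l f g ⟨N, hN, hlt, hgt⟩
    show B.telTgt _ f = B.telTgt _ g
    unfold telTgt
    refine congrArg (B.castV _) ?_
    rcases eq_or_lt_of_le (show N ≤ ns (l + 1) - ns l - 1 by omega) with h | h
    · subst h
      exact B.elt_tgt _ _ _ hlt
    · exact congrArg B.tgt (hgt _ (by omega) h)
  elt_irrefl := by
    rintro l f ⟨N, h, hlt, -⟩
    exact B.elt_irrefl _ _ hlt
  elt_trans := by
    rintro l f g h ⟨N₁, hN₁, hlt₁, hgt₁⟩ ⟨N₂, hN₂, hlt₂, hgt₂⟩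
    rcases lt_trichotomy N₁ N₂ with hc | hc | hc
    · exact ⟨N₂, hN₂, by rw [hgt₁ N₂ hN₂ hc]; exact hlt₂,
        fun i hi hN => (hgt₁ i hi (by omega)).trans (hgt₂ i hi hN)⟩
    · subst hc
      exact ⟨N₁, hN₁, B.elt_trans _ _ _ _ hlt₁ hlt₂,
        fun i hi hN => (hgt₁ i hi hN).trans (hgt₂ i hi hN)⟩
    · refine ⟨N₁, hN₁, ?_, fun i hi hN => (hgt₁ i hi hN).trans (hgt₂ i hi (by omega))⟩
      rw [← hgt₂ N₁ hN₁ hc]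
      exact hlt₁
  elt_total := by
    intro l f g htgt hne
    classical
    have hab : ns l < ns (l + 1) := hmono (Nat.lt_succ_self l)
    set b := ns (l + 1) - ns l with hb
    have hex : ∃ N, ∃ h : N < b, f.1 ⟨N, h⟩ ≠ g.1 ⟨N, h⟩ := by
      by_contra hco
      push_neg at hco
      exact hne (Subtype.ext (funext fun i => hco i.val i.isLt))
    set P : ℕ → Prop := fun N => ∃ h : N < b, f.1 ⟨N, h⟩ ≠ g.1 ⟨N, h⟩ with hP
    obtain ⟨N₀, hN₀⟩ := hex
    set N := Nat.findGreatest P b with hNdef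
    have hPN : P N := Nat.findGreatest_spec (le_of_lt hN₀.choose) hN₀
    have hafter : ∀ i (hi : i < b), N < i → f.1 ⟨i, hi⟩ = g.1 ⟨i, hi⟩ := by
      intro i hi hNi
      by_contra hcon
      exact Nat.findGreatest_is_greatest hNi (le_of_lt hi) ⟨hi, hcon⟩
    clear_value N
    obtain ⟨hNb, hNne⟩ := hPN
    have htgtN : B.tgt (f.1 ⟨N, hNb⟩) = B.tgt (g.1 ⟨N, hNb⟩) := by
      rcases eq_or_lt_of_le (show N ≤ b - 1 by omega) with h | h
      · -- N is the last index; use equality of targets of the composite edges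
        subst h
        exact B.castV_inj _ htgt
      · have h2 : f.1 ⟨N + 1, by omega⟩ = g.1 ⟨N + 1, by omega⟩ :=
          hafter (N + 1) (by omega) (by omega)
        rw [f.2 N (by omega), g.2 N (by omega), h2]
    rcases B.elt_total _ _ _ htgtN hNne with h | h
    · exact Or.inl ⟨N, hNb, h, hafter⟩
    · exact Or.inr ⟨N, hNb, h, fun i hi hN => (hafter i hi hN).symm⟩

def teleMap (ns : ℕ → ℕ) (hmono : StrictMono ns) (h0 : ns 0 = 0) (x : B.PathSpace) :
    (B.Telescope ns hmono h0).PathSpace :=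
  ⟨fun l => ⟨fun i => x.1 (ns l + i.val), fun i _ => x.2 (ns l + i)⟩, fun l => by
    have hab : ns l < ns (l + 1) := hmono (Nat.lt_succ_self l)
    have hm : ns l + (ns (l + 1) - ns l - 1) + 1 = ns (l + 1) := by omega
    show B.castV _ (B.tgt (x.1 (ns l + (ns (l + 1) - ns l - 1)))) = B.src (x.1 (ns (l + 1) + 0))
    rw [x.2 (ns l + (ns (l + 1) - ns l - 1))]
    exact B.castV_eq_of_heq _ (by rw [hm]; exact HEq.rfl)⟩


/-- Level `n+1` is uniformly ordered: there is a single nonempty block `P` of paths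
from the root to level `n` such that the `n`-basic block at every vertex at level
`n+1` is a positive power of `P`. -/
def UniformlyOrderedLevel (n : ℕ) : Prop :=
  ∃ (p : ℕ) (hp : 0 < p) (P : Fin p → B.FinPath n),
    ∀ v : B.V (n + 1), ∃ (m : ℕ), 0 < m ∧
      ∃ enum : Fin (m * p) ≃ { q : B.FinPath (n + 1) // B.EndsAt q v },
        (∀ i j : Fin (m * p), i < j ↔ B.finLT (enum i).1 (enum j).1) ∧
        (∀ i : Fin (m * p),
          B.truncTo n (Nat.le_succ n) (enum i).1 = P ⟨i.val % p, Nat.mod_lt _ hp⟩)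

/-- The ordinal label of an edge: its position in the linear order on the edges
into its target. -/
noncomputable def edgeLabel {n : ℕ} (e : B.E n) : ℕ := Nat.card { e' : B.E n // B.elt e' e }

/-- Deterministic: for every `n ≥ 1`, distinct edges with the same source at level
`n` have different ordinal labels. -/
def Deterministic : Prop :=
  ∀ n : ℕ, 1 ≤ n → ∀ e f : B.E n, B.src e = B.src f → e ≠ f →
    B.edgeLabel e ≠ B.edgeLabel f

end BDiagram

/-- A Bratteli–Vershik system: a simple, properly ordered ordered Bratteli diagram
together with its Vershik map. -/
structure BVSystem where
  B : BDiagram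
  T : B.PathSpace ≃ B.PathSpace
  proper : B.ProperlyOrdered
  simple : B.Simple
  vershik : B.IsVershik T

/-- Conjugacy of systems: an equivariant homeomorphism of the path spaces taking
minimal paths to minimal paths. -/
def Conjugate (S S' : BVSystem) : Prop :=
  ∃ φ : S.B.PathSpace ≃ S'.B.PathSpace,
    (@Continuous _ _ S.B.pathTop S'.B.pathTop φ) ∧
    (@Continuous _ _ S'.B.pathTop S.B.pathTop φ.symm) ∧
    (∀ x, φ (S.T x) = S'.T (φ x)) ∧
    (∀ x, S.B.IsMinPath x → S'.B.IsMinPath (φ x))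

/-- An odometer: a system whose diagram has exactly one vertex at every level. -/
def IsOdometer (S : BVSystem) : Prop := ∀ n, Subsingleton (S.B.V n)

namespace BDiagram

open Filter Topology Function

instance instTopologicalSpaceE (B : BDiagram) (n : ℕ) : TopologicalSpace (B.E n) := ⊥

instance instDiscreteTopologyE (B : BDiagram) (n : ℕ) : DiscreteTopology (B.E n) := ⟨rfl⟩

noncomputable instance instFintypeE (B : BDiagram) (n : ℕ) : Fintype (B.E n) := B.fintE n

instance instTopologicalSpacePathSpace (B : BDiagram) : TopologicalSpace B.PathSpace := B.pathTop

section Topology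

variable {B : BDiagram}

theorem continuous_apply_val (n : ℕ) : Continuous fun x : B.PathSpace => x.1 n :=
  (continuous_apply n).comp continuous_subtype_val

theorem isClosed_setOf_forall_lt (N : ℕ) (P : ∀ n, B.E n → Prop) :
    IsClosed {x : B.PathSpace | ∀ i < N, P i (x.1 i)} := by
  simp only [Set.ofPred_forall]
  exact isClosed_iInter fun i => isClosed_iInter fun _ =>
    (isClosed_discrete {e | P i e}).preimage (continuous_apply_val i)

variable (B) in
theorem isClosed_setOf_isPath :
    IsClosed {f : ∀ n, B.E n | ∀ n, B.tgt (f n) = B.src (f (n + 1))} := by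
  simp only [Set.ofPred_forall]
  exact isClosed_iInter fun n =>
    (isClosed_discrete {p : B.E n × B.E (n + 1) | B.tgt p.1 = B.src p.2}).preimage
      (f := fun f : ∀ n, B.E n => (f n, f (n + 1))) (by fun_prop)

instance instCompactSpacePathSpace (B : BDiagram) : CompactSpace B.PathSpace :=
  isCompact_iff_compactSpace.mp (B.isClosed_setOf_isPath.isCompact)

def cylinder (x : B.PathSpace) (n : ℕ) : Set B.PathSpace :=
  Subtype.val ⁻¹' PiNat.cylinder x.1 n

theorem mem_cylinder {x y : B.PathSpace} {n : ℕ} : y ∈ cylinder x n ↔ ∀ i < n, y.1 i = x.1 i :=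
  Iff.rfl

theorem self_mem_cylinder (x : B.PathSpace) (n : ℕ) : x ∈ cylinder x n :=
  PiNat.self_mem_cylinder x.1 n

theorem isOpen_cylinder (x : B.PathSpace) (n : ℕ) : IsOpen (cylinder x n) :=
  (PiNat.isOpen_cylinder B.E x.1 n).preimage continuous_subtype_val

theorem cylinder_anti (x : B.PathSpace) {m n : ℕ} (h : m ≤ n) : cylinder x n ⊆ cylinder x m :=
  Set.preimage_mono (PiNat.cylinder_anti x.1 h)

theorem cylinder_eq_of_mem {x y : B.PathSpace} {n : ℕ} (h : y ∈ cylinder x n) :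
    cylinder y n = cylinder x n := by
  rw [cylinder, cylinder, PiNat.mem_cylinder_iff_eq.1 h]

theorem exists_cylinder_subset {U : Set B.PathSpace} {x : B.PathSpace} (hU : U ∈ 𝓝 x) :
    ∃ n, cylinder x n ⊆ U := by
  obtain ⟨V, hV, hVU⟩ := (mem_nhds_induced Subtype.val x U).1 hU
  obtain ⟨_, ⟨z, n, rfl⟩, hxz, hzV⟩ :=
    (PiNat.isTopologicalBasis_cylinders B.E).mem_nhds_iff.1 hV
  refine ⟨n, fun y hy => hVU (hzV ?_)⟩
  rw [← PiNat.mem_cylinder_iff_eq.1 hxz]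
  exact hy

theorem exists_mapsTo_cylinder {B' : BDiagram} {f : B.PathSpace → B'.PathSpace}
    (hf : Continuous f) (k : ℕ) :
    ∃ K, ∀ x, Set.MapsTo f (cylinder x K) (cylinder (f x) k) := by
  have hnhds : ∀ x, ∃ n, cylinder x n ⊆ f ⁻¹' cylinder (f x) k := fun x =>
    exists_cylinder_subset (hf.continuousAt.preimage_mem_nhds
      ((isOpen_cylinder _ _).mem_nhds (self_mem_cylinder _ _)))
  choose m hm using hnhds
  obtain ⟨t, ht⟩ := isCompact_univ.elim_finite_subcover (fun x => cylinder x (m x))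
    (fun x => isOpen_cylinder x _) (fun x _ => Set.mem_iUnion.2 ⟨x, self_mem_cylinder x _⟩)
  refine ⟨t.sup m, fun u v hv => ?_⟩
  obtain ⟨x, hxt, hux⟩ := Set.mem_iUnion₂.1 (ht (Set.mem_univ u))
  have hvx : v ∈ cylinder x (m x) :=
    cylinder_eq_of_mem hux ▸ cylinder_anti u (Finset.le_sup hxt) hv
  rw [cylinder_eq_of_mem (hm x hux)]
  exact hm x hvx

theorem exists_setOf_isMinEdge_subset_cylinder {z : B.PathSpace}
    (hz : ∀ x, B.IsMinPath x → x = z) (J : ℕ) :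
    ∃ N, {x : B.PathSpace | ∀ i < N, B.IsMinEdge (x.1 i)} ⊆ cylinder z J := by
  refine exists_subset_nhds_of_isCompact'
    (V := fun N => {x : B.PathSpace | ∀ i < N, B.IsMinEdge (x.1 i)})
    (Antitone.directed_ge fun M N hMN x hx i hi => hx i (hi.trans_le hMN))
    (fun N => (isClosed_setOf_forall_lt N _).isCompact)
    (fun N => isClosed_setOf_forall_lt N _) fun x hx => ?_
  have hmin : B.IsMinPath x := fun n => Set.mem_iInter.1 hx (n + 1) n n.lt_succ_self
  rw [hz x hmin]
  exact (isOpen_cylinder z J).mem_nhds (self_mem_cylinder z J)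

end Topology

section Dynamics

variable {B B₁ B₂ : BDiagram} {T : B.PathSpace ≃ B.PathSpace}
  {T₁ : B₁.PathSpace ≃ B₁.PathSpace} {T₂ : B₂.PathSpace ≃ B₂.PathSpace}

theorem semiconj_iterZ {ψ : B₁.PathSpace ≃ B₂.PathSpace} (hψ : Semiconj ψ T₁ T₂) (m : ℤ) :
    Semiconj ψ (B₁.iterZ T₁ m) (B₂.iterZ T₂ m) := by
  have hT : ψ.permCongrHom T₁ = T₂ := Equiv.ext fun y => by
    simp only [Equiv.permCongrHom_coe, Equiv.permCongr_apply]
    rw [hψ, Equiv.apply_symm_apply]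
  intro x
  simpa [iterZ, hT, Equiv.permCongrHom_coe, Equiv.permCongr_apply] using
    congrArg (· (ψ x)) (map_zpow ψ.permCongrHom T₁ m)

theorem sameCoding_iff_mem_cylinder {k : ℕ} {x y : B.PathSpace} :
    B.SameCoding T k x y ↔ ∀ m, B.iterZ T m x ∈ cylinder (B.iterZ T m y) k :=
  forall_congr' fun _ => Iff.rfl

theorem SameCoding.mono {k k' : ℕ} {x y : B.PathSpace} (h : B.SameCoding T k' x y)
    (hk : k ≤ k') : B.SameCoding T k x y :=
  fun m i hi => h m i (hi.trans_le hk)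

theorem HasCut.mono {j j' : ℕ} {x y : B.PathSpace} (h : B.HasCut T j' x y) (hj : j ≤ j') :
    B.HasCut T j x y :=
  let ⟨m, hx, hy⟩ := h
  ⟨m, fun i hi => hx i (hi.trans_le hj), fun i hi => hy i (hi.trans_le hj)⟩

theorem SameCoding.exists_depthPair {k K : ℕ} {x y : B.PathSpace} (h : B.SameCoding T k x y)
    (hK : ¬ B.SameCoding T K x y) : ∃ d, k ≤ d ∧ d < K ∧ B.DepthPair T d x y := by
  induction K with
  | zero => exact absurd (fun _ _ hi => absurd hi (Nat.not_lt_zero _)) hK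
  | succ K ih =>
    by_cases hKxy : B.SameCoding T K x y
    · have hne : x ≠ y := by rintro rfl; exact hK fun _ _ _ => rfl
      have hkK : k ≤ K := by
        by_contra hlt
        exact hK (h.mono (by omega))
      exact ⟨K, hkK, K.lt_succ_self, hne, hKxy, hK⟩
    · obtain ⟨d, hkd, hdK, hd⟩ := ih hKxy
      exact ⟨d, hkd, hdK.trans K.lt_succ_self, hd⟩

theorem exists_sameCoding_map {ψ : B₁.PathSpace ≃ B₂.PathSpace} (hc : Continuous ψ)
    (hψ : Semiconj ψ T₁ T₂) (k : ℕ) :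
    ∃ K, ∀ x y, B₁.SameCoding T₁ K x y → B₂.SameCoding T₂ k (ψ x) (ψ y) := by
  obtain ⟨K, hK⟩ := exists_mapsTo_cylinder hc k
  refine ⟨K, fun x y h => sameCoding_iff_mem_cylinder.2 fun m => ?_⟩
  rw [← semiconj_iterZ hψ m x, ← semiconj_iterZ hψ m y]
  exact hK _ (sameCoding_iff_mem_cylinder.1 h m)

theorem exists_hasCut_map {ψ : B₁.PathSpace ≃ B₂.PathSpace} (hc : Continuous ψ)
    (hψ : Semiconj ψ T₁ T₂) {z : B₁.PathSpace} (hz : ∀ x, B₁.IsMinPath x → x = z)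
    (hψz : B₂.IsMinPath (ψ z)) (j : ℕ) :
    ∃ N, ∀ x y, B₁.HasCut T₁ N x y → B₂.HasCut T₂ j (ψ x) (ψ y) := by
  obtain ⟨K, hK⟩ := exists_mapsTo_cylinder hc j
  obtain ⟨N, hN⟩ := exists_setOf_isMinEdge_subset_cylinder hz K
  have hmin : ∀ u, (∀ i < N, B₁.IsMinEdge (u.1 i)) → ∀ i < j, B₂.IsMinEdge ((ψ u).1 i) :=
    fun u hu i hi => mem_cylinder.1 (hK z (hN hu)) i hi ▸ hψz i
  refine ⟨N, ?_⟩
  rintro x y ⟨m, hx, hy⟩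
  exact ⟨m, semiconj_iterZ hψ m x ▸ hmin _ hx, semiconj_iterZ hψ m y ▸ hmin _ hy⟩

theorem Untimed.exists_forall_depthPair_not_hasCut (hT : B.Untimed T) :
    ∀ U, ∃ j, ∀ d, 1 ≤ d → d < U → ∀ x y, B.DepthPair T d x y → ¬ B.HasCut T j x y
  | 0 => ⟨0, fun d _ hd => absurd hd (Nat.not_lt_zero d)⟩
  | U + 1 => by
    obtain ⟨j₀, h₀⟩ := hT.exists_forall_depthPair_not_hasCut U
    rcases Nat.eq_zero_or_pos U with rfl | hU
    · exact ⟨j₀, fun d h1 h2 => by omega⟩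
    obtain ⟨j₁, -, h₁⟩ := hT U hU
    refine ⟨max j₀ j₁, fun d h1 h2 x y hd hc => ?_⟩
    rcases Nat.lt_succ_iff_lt_or_eq.1 h2 with h | rfl
    · exact h₀ d h1 h x y hd (hc.mono (le_max_left _ _))
    · exact h₁ x y hd (hc.mono (le_max_right _ _))

end Dynamics

end BDiagram

open Function BDiagram

theorem Conjugate.trans {S₁ S₂ S₃ : BVSystem} (h₁₂ : Conjugate S₁ S₂) (h₂₃ : Conjugate S₂ S₃) :
    Conjugate S₁ S₃ := by
  obtain ⟨φ, hc, hc', hT, hmin⟩ := h₁₂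
  obtain ⟨φ', hd, hd', hT', hmin'⟩ := h₂₃
  exact ⟨φ.trans φ', hd.comp hc, hc'.comp hd', fun x => by simp [hT, hT'],
    fun x hx => hmin' _ (hmin x hx)⟩

theorem Conjugate.symm {S S' : BVSystem} (h : Conjugate S S') : Conjugate S' S := by
  obtain ⟨φ, hc, hc', hT, hmin⟩ := h
  obtain ⟨z, hz, -⟩ := S.proper.1
  obtain ⟨_, _, huniq⟩ := S'.proper.1
  refine ⟨φ.symm, hc', by simpa using hc, Semiconj.inverse_left hT φ.left_inv φ.right_inv,
    fun x hx => ?_⟩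
  have hx : x = φ z := (huniq x hx).trans (huniq _ (hmin z hz)).symm
  rw [hx, φ.symm_apply_apply]
  exact hz

theorem Conjugate.exists_bounded_depthPair_hasCut {S₁ S₂ : BVSystem} (h : Conjugate S₁ S₂)
    (hWT : S₁.B.WellTimed S₁.T) :
    ∃ U, ∀ j, ∃ d, 1 ≤ d ∧ d < U ∧
      ∃ x y, S₂.B.DepthPair S₂.T d x y ∧ S₂.B.HasCut S₂.T j x y := by
  obtain ⟨φ, hc, hc', hT, hmin⟩ := h
  obtain ⟨z, hz, huniq⟩ := S₁.proper.1
  obtain ⟨K, hK⟩ := exists_sameCoding_map hc hT 1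
  obtain ⟨U, hU⟩ := exists_sameCoding_map hc' (Semiconj.inverse_left hT φ.left_inv φ.right_inv)
    (max K 1 + 1)
  refine ⟨U, fun j => ?_⟩
  obtain ⟨N, hN⟩ := exists_hasCut_map hc hT huniq (hmin z hz) j
  obtain ⟨x, y, ⟨-, hxy, hnxy⟩, hcut⟩ :=
    hWT (max K 1) (le_max_right _ _) (max (max K 1 + 1) N) (by omega)
  obtain ⟨d, hd, hdU, hpair⟩ := (hK x y (hxy.mono (le_max_left _ _))).exists_depthPair
    fun h => hnxy (by simpa using hU _ _ h)
  exact ⟨d, hd, hdU, _, _, hpair, hN x y (hcut.mono (le_max_right _ _))⟩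

/-- No simple, properly ordered Bratteli–Vershik system that is
conjugate to a well timed system is also conjugate to an untimed system. -/
theorem not_conjugate_wellTimed_and_untimed (S : BVSystem) :
    ¬ ((∃ S₁ : BVSystem, Conjugate S S₁ ∧ S₁.B.WellTimed S₁.T) ∧
       (∃ S₂ : BVSystem, Conjugate S S₂ ∧ S₂.B.Untimed S₂.T)) := by
  rintro ⟨⟨S₁, h₁, hWT⟩, S₂, h₂, hUT⟩
  obtain ⟨U, hU⟩ := (h₁.symm.trans h₂).exists_bounded_depthPair_hasCut hWT
  obtain ⟨j, hj⟩ := hUT.exists_forall_depthPair_not_hasCut U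
  obtain ⟨d, hd, hdU, x, y, hpair, hcut⟩ := hU j
  exact hj d hd hdU x y hpair hcut
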